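/- Let M₁ and M₂ be two commuting N-qubit Pauli strings that are distinct as strings, and let μ be the uniform (rotation-invariant) probability measure on the unit sphere of ℂ^{2^N}. Then the expected covariance vanishes: ∫ (⟨ψ, M₁M₂ ψ⟩ − ⟨ψ, M₁ ψ⟩·⟨ψ, M₂ ψ⟩) dμ(ψ) = 0. -/

import Mathlib

/-!
Two distinct Pauli strings differ at some qubit `j`, and at that qubit there is a single-qubit
Pauli commuting with one of the two entries and anticommuting with the other. The string `P`
carrying it at `j` and `I` elsewhere is a unitary with `P M₁ P = ± M₁`, `P M₂ P = ∓ M₂`, so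
replacing `ψ` by `P ψ` changes the sign of `Cov_ψ(M₁, M₂)`. A unitarily invariant measure does
not see this change, hence the expected covariance equals its own negative.
-/

open Matrix Finset

inductive Pauli : Type
  | I | X | Y | Z
  deriving DecidableEq

instance : Fintype Pauli :=
  ⟨{.I, .X, .Y, .Z}, fun x => by cases x <;> decide⟩

noncomputable def Pauli.mat : Pauli → Matrix (Fin 2) (Fin 2) ℂ
  | .I => 1
  | .X => !![0, 1; 1, 0]
  | .Y => !![0, -Complex.I; Complex.I, 0]
  | .Z => !![1, 0; 0, -1]

/-- An `N`-qubit Pauli string: a function from qubit indices to single-qubit Paulis. -/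
abbrev PauliString (N : ℕ) := Fin N → Pauli

/-- The `2^N × 2^N` matrix of a Pauli string, as the tensor (Kronecker) product of its
entries, with rows/columns indexed by `Fin N → Fin 2`. -/
noncomputable def Pmat {N : ℕ} (A : PauliString N) :
    Matrix (Fin N → Fin 2) (Fin N → Fin 2) ℂ :=
  Matrix.of fun x y => ∏ j, (A j).mat (x j) (y j)

open MeasureTheory

/-- Expectation value `⟨ψ, M ψ⟩` of a matrix `M` in the state `ψ`. -/
noncomputable def expval {N : ℕ} (M : Matrix (Fin N → Fin 2) (Fin N → Fin 2) ℂ)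
    (ψ : EuclideanSpace ℂ (Fin N → Fin 2)) : ℂ :=
  inner ℂ ψ (Matrix.toEuclideanLin M ψ)

/-- Covariance `Cov_ψ(M₁, M₂) = ⟨ψ, M₁M₂ ψ⟩ − ⟨ψ, M₁ ψ⟩⟨ψ, M₂ ψ⟩`. -/
noncomputable def covar {N : ℕ} (M₁ M₂ : Matrix (Fin N → Fin 2) (Fin N → Fin 2) ℂ)
    (ψ : EuclideanSpace ℂ (Fin N → Fin 2)) : ℂ :=
  expval (M₁ * M₂) ψ - expval M₁ ψ * expval M₂ ψ

theorem MeasureTheory.integral_eq_zero_of_map_eq_of_comp_eq_neg {α E : Type*}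
    [MeasurableSpace α] [NormedAddCommGroup E] [NormedSpace ℝ E] {μ : Measure α}
    {T : α → α} {f : α → E} (hT : AEMeasurable T μ) (hf : AEStronglyMeasurable f μ)
    (hμ : μ.map T = μ) (hneg : ∀ x, f (T x) = -f x) :
    ∫ x, f x ∂μ = 0 := by
  have : IsAddTorsionFree E := .of_isTorsionFree ℝ E
  have hf' : AEStronglyMeasurable f (μ.map T) := by rwa [hμ]
  have hcomp : ∫ x, f (T x) ∂μ = ∫ x, f x ∂μ := by rw [← integral_map hT hf', hμ]
  rw [← self_eq_neg, ← integral_neg, ← hcomp]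
  simp only [hneg]

namespace Pauli

noncomputable def commSign (a b : Pauli) : ℂ := if a = .I ∨ b = .I ∨ a = b then 1 else -1

theorem mat_mul_comm (a b : Pauli) : a.mat * b.mat = commSign a b • (b.mat * a.mat) := by
  cases a <;> cases b <;>
    · ext i j
      fin_cases i <;> fin_cases j <;>
        simp [commSign, Pauli.mat, Matrix.mul_apply, Fin.sum_univ_two, Matrix.one_apply]

theorem mat_mul_self (a : Pauli) : a.mat * a.mat = 1 := by
  cases a <;>
    · ext i j
      fin_cases i <;> fin_cases j <;>
        simp [Pauli.mat, Matrix.mul_apply, Fin.sum_univ_two, Matrix.one_apply]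

theorem conjTranspose_mat (a : Pauli) : a.matᴴ = a.mat := by
  cases a <;>
    · ext i j
      fin_cases i <;> fin_cases j <;> simp [Pauli.mat]

theorem commSign_I_left (a : Pauli) : commSign .I a = 1 := if_pos (Or.inl rfl)

theorem exists_commSign_mul_eq_neg_one {a b : Pauli} (h : a ≠ b) :
    ∃ c, commSign c a * commSign c b = -1 := by
  -- if neither is `I`, `a` itself anticommutes with `b` only; otherwise take a Pauli other than
  -- `I` and the non-identity entry
  refine ⟨if a = .I ∨ b = .I then (if a = .X ∨ b = .X then .Y else .X) else a, ?_⟩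
  cases a <;> cases b <;> simp_all [commSign]

end Pauli

namespace PauliString

variable {N : ℕ}

noncomputable def commSign (A B : PauliString N) : ℂ := ∏ j, Pauli.commSign (A j) (B j)

theorem Pmat_mul_Pmat (A B : PauliString N) :
    Pmat A * Pmat B = Matrix.of fun x y => ∏ j, ((A j).mat * (B j).mat) (x j) (y j) := by
  ext x y
  simp only [Pmat, Matrix.mul_apply, Matrix.of_apply, Fintype.prod_sum, ← prod_mul_distrib]

theorem Pmat_mul_comm (A B : PauliString N) :
    Pmat A * Pmat B = commSign A B • (Pmat B * Pmat A) := by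
  ext x y
  simp only [Pmat_mul_Pmat, commSign, Matrix.of_apply, Matrix.smul_apply, smul_eq_mul,
    ← prod_mul_distrib, Pauli.mat_mul_comm (A _) (B _)]

theorem Pmat_mul_self (A : PauliString N) : Pmat A * Pmat A = 1 := by
  ext x y
  simp only [Pmat_mul_Pmat, Matrix.of_apply, Pauli.mat_mul_self, Matrix.one_apply]
  by_cases h : x = y
  · simp [h]
  · obtain ⟨j, hj⟩ := Function.ne_iff.mp h
    rw [if_neg h]
    exact prod_eq_zero (mem_univ j) (if_neg hj)

theorem conjTranspose_Pmat (A : PauliString N) : (Pmat A)ᴴ = Pmat A := by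
  ext x y
  simp only [Matrix.conjTranspose_apply, Pmat, Matrix.of_apply, star_prod]
  refine prod_congr rfl fun j _ => ?_
  rw [← Matrix.conjTranspose_apply, Pauli.conjTranspose_mat]

theorem Pmat_mem_unitaryGroup (A : PauliString N) :
    Pmat A ∈ Matrix.unitaryGroup (Fin N → Fin 2) ℂ := by
  rw [Matrix.mem_unitaryGroup_iff, star_eq_conjTranspose, conjTranspose_Pmat, Pmat_mul_self]

theorem conjTranspose_Pmat_mul_Pmat_mul_Pmat (P A : PauliString N) :
    (Pmat P)ᴴ * Pmat A * Pmat P = commSign P A • Pmat A := by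
  rw [conjTranspose_Pmat, Pmat_mul_comm P A, Matrix.smul_mul, mul_assoc, Pmat_mul_self, mul_one]

theorem exists_commSign_mul_eq_neg_one {A B : PauliString N} (h : A ≠ B) :
    ∃ P, commSign P A * commSign P B = -1 := by
  obtain ⟨j₀, hj₀⟩ := Function.ne_iff.mp h
  obtain ⟨c, hc⟩ := Pauli.exists_commSign_mul_eq_neg_one hj₀
  refine ⟨Function.update (fun _ => .I) j₀ c, ?_⟩
  rw [commSign, commSign, ← prod_mul_distrib, prod_eq_single j₀ (fun j _ hj => ?_) (by simp)]
  · simpa using hc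
  · simp [Function.update_of_ne hj, Pauli.commSign_I_left]

end PauliString

section Covariance

variable {N : ℕ}

theorem expval_toEuclideanLin (M U : Matrix (Fin N → Fin 2) (Fin N → Fin 2) ℂ)
    (ψ : EuclideanSpace ℂ (Fin N → Fin 2)) :
    expval M (Matrix.toEuclideanLin U ψ) = expval (Uᴴ * M * U) ψ := by
  rw [expval, expval, Matrix.toLpLin_mul_same, Matrix.toLpLin_mul_same, LinearMap.comp_apply,
    LinearMap.comp_apply, Matrix.toEuclideanLin_conjTranspose_eq_adjoint,
    LinearMap.adjoint_inner_right]

theorem expval_smul (c : ℂ) (M : Matrix (Fin N → Fin 2) (Fin N → Fin 2) ℂ)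
    (ψ : EuclideanSpace ℂ (Fin N → Fin 2)) :
    expval (c • M) ψ = c * expval M ψ := by
  simp [expval]

theorem continuous_expval (M : Matrix (Fin N → Fin 2) (Fin N → Fin 2) ℂ) :
    Continuous (expval M) :=
  continuous_id.inner (Matrix.toEuclideanLin M).continuous_of_finiteDimensional

theorem continuous_covar (M₁ M₂ : Matrix (Fin N → Fin 2) (Fin N → Fin 2) ℂ) :
    Continuous (covar M₁ M₂) :=
  (continuous_expval _).sub ((continuous_expval _).mul (continuous_expval _))

theorem covar_toEuclideanLin_of_conj_eq_smul {M₁ M₂ U : Matrix (Fin N → Fin 2) (Fin N → Fin 2) ℂ}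
    {s₁ s₂ : ℂ} (hU : U ∈ Matrix.unitaryGroup (Fin N → Fin 2) ℂ)
    (h₁ : Uᴴ * M₁ * U = s₁ • M₁) (h₂ : Uᴴ * M₂ * U = s₂ • M₂)
    (ψ : EuclideanSpace ℂ (Fin N → Fin 2)) :
    covar M₁ M₂ (Matrix.toEuclideanLin U ψ) = s₁ * s₂ * covar M₁ M₂ ψ := by
  have h₁₂ : Uᴴ * (M₁ * M₂) * U = (s₁ * s₂) • (M₁ * M₂) := by
    have hUU : U * Uᴴ = 1 := Matrix.mem_unitaryGroup_iff.mp hU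
    calc Uᴴ * (M₁ * M₂) * U = (Uᴴ * M₁ * U) * (Uᴴ * M₂ * U) := by
          simp only [Matrix.mul_assoc, ← Matrix.mul_assoc U Uᴴ, hUU, Matrix.one_mul]
      _ = (s₁ * s₂) • (M₁ * M₂) := by rw [h₁, h₂, smul_mul_smul_comm]
  simp only [covar, expval_toEuclideanLin, h₁, h₂, h₁₂, expval_smul]
  ring

end Covariance

theorem expected_covariance_zero_general {N : ℕ} (M₁ M₂ : PauliString N) (hne : M₁ ≠ M₂)
    [MeasurableSpace (EuclideanSpace ℂ (Fin N → Fin 2))]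
    [BorelSpace (EuclideanSpace ℂ (Fin N → Fin 2))]
    (μ : Measure (EuclideanSpace ℂ (Fin N → Fin 2)))
    (hinv : ∀ U : Matrix.unitaryGroup (Fin N → Fin 2) ℂ,
      Measure.map
        (fun ψ => Matrix.toEuclideanLin (U : Matrix (Fin N → Fin 2) (Fin N → Fin 2) ℂ) ψ)
        μ = μ) :
    ∫ ψ, covar (Pmat M₁) (Pmat M₂) ψ ∂μ = 0 := by
  obtain ⟨P, hP⟩ := PauliString.exists_commSign_mul_eq_neg_one hne
  have hU := PauliString.Pmat_mem_unitaryGroup P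
  refine integral_eq_zero_of_map_eq_of_comp_eq_neg
    (Matrix.toEuclideanLin (Pmat P)).continuous_of_finiteDimensional.aemeasurable
    (continuous_covar _ _).aestronglyMeasurable (hinv ⟨_, hU⟩) fun ψ => ?_
  rw [covar_toEuclideanLin_of_conj_eq_smul hU
    (PauliString.conjTranspose_Pmat_mul_Pmat_mul_Pmat P M₁)
    (PauliString.conjTranspose_Pmat_mul_Pmat_mul_Pmat P M₂), hP, neg_one_mul]

/-- For two commuting distinct `N`-qubit Pauli strings, the covariance averaged with
respect to the uniform (i.e. the rotation-invariant, Haar) probability measure on the unit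
sphere of `ℂ^(2^N)` vanishes. -/
theorem expected_covariance_zero {N : ℕ} (M₁ M₂ : PauliString N) (hne : M₁ ≠ M₂)
    (hcomm : Pmat M₁ * Pmat M₂ = Pmat M₂ * Pmat M₁)
    [MeasurableSpace (EuclideanSpace ℂ (Fin N → Fin 2))]
    [BorelSpace (EuclideanSpace ℂ (Fin N → Fin 2))]
    (μ : Measure (EuclideanSpace ℂ (Fin N → Fin 2))) [IsProbabilityMeasure μ]
    (hsphere : μ {ψ : EuclideanSpace ℂ (Fin N → Fin 2) | ‖ψ‖ = 1}ᶜ = 0)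
    (hinv : ∀ U : Matrix.unitaryGroup (Fin N → Fin 2) ℂ,
      Measure.map
        (fun ψ => Matrix.toEuclideanLin (U : Matrix (Fin N → Fin 2) (Fin N → Fin 2) ℂ) ψ)
        μ = μ) :
    ∫ ψ, covar (Pmat M₁) (Pmat M₂) ψ ∂μ = 0 :=
  expected_covariance_zero_general M₁ M₂ hne μ hinv
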